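/- Let G be a group and Z a normal subgroup contained in the hypercenter of G, built up by a finite series of G-invariant subgroups 1 = Z_0 ≤ Z_1 ≤ ... ≤ Z_{n+1} = Z with each factor Z_{j+1}/Z_j central in G/Z_j. Then G/C_G(Z) is nilpotent. -/

import Mathlib

/-!
With `γ_0(G) = G`, the lower and upper central series interlock:
`⁅γ_i(G), ζ_{i+j+1}(G)⁆ ≤ ζ_j(G)`, by induction on `i` through the three subgroups lemma taken
modulo `ζ_j(G)`. For `j = 0` this says that `γ_n(G)` centralizes `ζ_{n+1}(G) ≥ Z`, so the lower
central series of `G/C_G(Z)` vanishes at step `n`.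
-/

namespace Subgroup

variable {G : Type*} [Group G]

theorem commutator_commutator_le_of_rotate {H₁ H₂ H₃ N : Subgroup G} [N.Normal]
    (h₁ : ⁅⁅H₂, H₃⁆, H₁⁆ ≤ N) (h₂ : ⁅⁅H₃, H₁⁆, H₂⁆ ≤ N) : ⁅⁅H₁, H₂⁆, H₃⁆ ≤ N := by
  rw [← QuotientGroup.ker_mk' N, ← map_eq_bot_iff, map_commutator, map_commutator] at h₁ h₂ ⊢
  exact commutator_commutator_eq_bot_of_rotate h₁ h₂

theorem commutator_top_upperCentralSeries_le (n : ℕ) :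
    ⁅(⊤ : Subgroup G), upperCentralSeries G (n + 1)⁆ ≤ upperCentralSeries G n := by
  rw [commutator_comm]
  exact commutator_upperCentralSeries_top_le G n

theorem commutator_lowerCentralSeries_upperCentralSeries_le (i j : ℕ) :
    ⁅lowerCentralSeries (⊤ : Subgroup G) i, upperCentralSeries G (i + j + 1)⁆ ≤
      upperCentralSeries G j := by
  induction i generalizing j with
  | zero => simpa using commutator_top_upperCentralSeries_le j
  | succ i ih =>
    rw [lowerCentralSeries_succ, show i + 1 + j + 1 = i + j + 1 + 1 by omega]
    apply commutator_commutator_le_of_rotate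
    · calc ⁅⁅⊤, upperCentralSeries G (i + j + 1 + 1)⁆, lowerCentralSeries ⊤ i⁆
          ≤ ⁅upperCentralSeries G (i + j + 1), lowerCentralSeries ⊤ i⁆ :=
            commutator_mono (commutator_top_upperCentralSeries_le _) le_rfl
        _ ≤ upperCentralSeries G j := commutator_comm (G := G) _ _ ▸ ih j
    · calc ⁅⁅upperCentralSeries G (i + j + 1 + 1), lowerCentralSeries ⊤ i⁆, ⊤⁆
          ≤ ⁅upperCentralSeries G (j + 1), ⊤⁆ :=
            commutator_mono (commutator_comm (G := G) _ _ ▸ ih (j + 1)) le_rfl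
        _ ≤ upperCentralSeries G j := commutator_upperCentralSeries_top_le G j

theorem lowerCentralSeries_le_centralizer_upperCentralSeries (n : ℕ) :
    lowerCentralSeries (⊤ : Subgroup G) n ≤
      centralizer (upperCentralSeries G (n + 1) : Set G) := by
  rw [← commutator_eq_bot_iff_le_centralizer, ← le_bot_iff]
  exact commutator_lowerCentralSeries_upperCentralSeries_le n 0

theorem isNilpotent_quotient_of_lowerCentralSeries_le {N : Subgroup G} [N.Normal] {n : ℕ}
    (h : lowerCentralSeries (⊤ : Subgroup G) n ≤ N) : Group.IsNilpotent (G ⧸ N) := by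
  refine nilpotent_iff_lowerCentralSeries.mpr ⟨n, ?_⟩
  rw [← map_top_of_surjective _ (QuotientGroup.mk'_surjective N), ← map_lowerCentralSeries,
    map_eq_bot_iff, QuotientGroup.ker_mk']
  exact h

end Subgroup

theorem kaloujnine_general (G : Type*) [Group G] (Z : Subgroup G)
    (n : ℕ) (hZ : Z ≤ upperCentralSeries G n)
    (hc : (Subgroup.centralizer (Z : Set G)).Normal) :
    Group.IsNilpotent (G ⧸ Subgroup.centralizer (Z : Set G)) := by
  have hZ' : Z ≤ Subgroup.upperCentralSeries G (n + 1) :=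
    hZ.trans (Subgroup.upperCentralSeries_mono G n.le_succ)
  exact Subgroup.isNilpotent_quotient_of_lowerCentralSeries_le
    ((Subgroup.lowerCentralSeries_le_centralizer_upperCentralSeries n).trans
      (Subgroup.centralizer_le hZ'))

/-- **Kaloujnine's theorem.** If `Z` is a normal subgroup of `G` possessing a
finite `G`-central series (equivalently `Z ≤ ζ_n(G)` for some finite `n`),
then `G/C_G(Z)` is nilpotent.  (The normality of the centralizer of the
normal subgroup `Z` is supplied as a hypothesis, being automatic.) -/
theorem kaloujnine (G : Type*) [Group G] (Z : Subgroup G) (hZn : Z.Normal)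
    (n : ℕ) (hZ : Z ≤ upperCentralSeries G n)
    (hc : (Subgroup.centralizer (Z : Set G)).Normal) :
    Group.IsNilpotent (G ⧸ Subgroup.centralizer (Z : Set G)) :=
  kaloujnine_general G Z n hZ hc
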